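/- arXiv:1305.3627 — 4 statements merged into one kernel-verified Lean document; each statement's English description precedes it below -/
import Mathlib

section
/- For any complex numbers a, b and any complex-valued function u defined in a neighborhood of 1 with limit u₀ as q→1, where 0 < u₀ < 1, the ratio of infinite q-Pochhammer symbols (q^a u(q); q)_∞ / (q^b u(q); q)_∞ converges to (1 - u₀)^(b-a) as q→1⁻. -/
/-!
For `‖x‖ < 1`, expanding each `log (1 - x qⁱ)` and summing the geometric series in `i` gives
`(x; q)_∞ = exp (-∑ₘ xᵐ / (m (1 - qᵐ)))`. With `x = qᵃ u` and `x = qᵇ u` the quotient becomes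
`exp ∑ₘ (uᵐ / m) (pᵇ - pᵃ) / (1 - p)` at `p = qᵐ`. Each difference quotient tends to `a - b` as
`p → 1` and is at most `‖b - a‖ p^(-K)` with `K = ‖a‖ + ‖b - a‖ + 1`, so for `q` near `1` the
`m`-th term is `O(ρᵐ)` with `ρ < 1`. Dominated convergence yields
`exp ((a - b) ∑ₘ u₀ᵐ / m) = exp ((b - a) log (1 - u₀))`.
-/

open Filter Topology

/-- The infinite q-Pochhammer symbol `(x; q)_∞ = ∏_{i=0}^∞ (1 - x q^i)`. -/
noncomputable def qPochInf (x q : ℂ) : ℂ := ∏' i : ℕ, (1 - x * q ^ i)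

open Complex

-- Sums run over all of `ℕ`: the `m = 0` term is `x⁰ / 0 = 0`.
lemma summable_pow_div_mul_one_sub_pow {x q : ℂ} (hx : ‖x‖ < 1) (hq : ‖q‖ < 1) :
    Summable fun m : ℕ => x ^ m / (m * (1 - q ^ m)) := by
  refine .of_norm_bounded ((summable_geometric_of_lt_one (norm_nonneg x) hx).div_const
    (1 - ‖q‖)) fun m => ?_
  rcases eq_or_ne m 0 with rfl | hm
  · simp only [CharP.cast_eq_zero, zero_mul, div_zero, norm_zero]
    exact div_nonneg (by positivity) (by linarith)
  have hden : 1 - ‖q‖ ≤ ‖(m : ℂ) * (1 - q ^ m)‖ := calc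
    1 - ‖q‖ ≤ 1 - ‖q ^ m‖ := by
      rw [norm_pow]; linarith [pow_le_of_le_one (norm_nonneg q) hq.le hm]
    _ ≤ ‖1 - q ^ m‖ := by simpa using norm_sub_norm_le (1 : ℂ) (q ^ m)
    _ ≤ ‖(m : ℂ) * (1 - q ^ m)‖ := by
      rw [norm_mul, Complex.norm_natCast]
      exact le_mul_of_one_le_left (norm_nonneg _) (by exact_mod_cast Nat.one_le_iff_ne_zero.mpr hm)
  rw [norm_div, norm_pow]
  exact div_le_div_of_nonneg_left (by positivity) (by linarith) hden

lemma norm_mul_pow_lt_one {x q : ℂ} (hx : ‖x‖ < 1) (hq : ‖q‖ ≤ 1) (i : ℕ) : ‖x * q ^ i‖ < 1 := by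
  rw [norm_mul, norm_pow]
  exact (mul_le_of_le_one_right (norm_nonneg x) (pow_le_one₀ (norm_nonneg q) hq)).trans_lt hx

lemma tsum_log_one_sub_mul_pow {x q : ℂ} (hx : ‖x‖ < 1) (hq : ‖q‖ < 1) :
    ∑' i : ℕ, log (1 - x * q ^ i) = -∑' m : ℕ, x ^ m / (m * (1 - q ^ m)) := by
  have hdouble : Summable (Function.uncurry fun (i m : ℕ) => (x * q ^ i) ^ m / m) := by
    refine .of_norm_bounded ((summable_geometric_of_lt_one (norm_nonneg q) hq).mul_of_nonneg
      (summable_geometric_of_lt_one (norm_nonneg x) hx) (fun _ => by positivity)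
      (fun _ => by positivity)) fun ⟨i, m⟩ => ?_
    rcases eq_or_ne m 0 with rfl | hm
    · simp
    have hm1 : (1 : ℝ) ≤ m := by exact_mod_cast Nat.one_le_iff_ne_zero.mpr hm
    calc ‖(x * q ^ i) ^ m / m‖ = ‖x‖ ^ m * (‖q‖ ^ i) ^ m / m := by
          rw [norm_div, norm_pow, norm_mul, norm_pow, mul_pow, Complex.norm_natCast]
      _ ≤ ‖x‖ ^ m * ‖q‖ ^ i := by
          refine (div_le_self (by positivity) hm1).trans ?_
          gcongr
          exact pow_le_of_le_one (by positivity) (pow_le_one₀ (norm_nonneg q) hq.le) hm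
      _ = ‖q‖ ^ i * ‖x‖ ^ m := mul_comm _ _
  have hinner (m : ℕ) : ∑' i : ℕ, (x * q ^ i) ^ m / m = x ^ m / (m * (1 - q ^ m)) := by
    simp_rw [mul_pow, ← pow_mul, mul_comm _ m, pow_mul, mul_div_right_comm, tsum_mul_left]
    rcases eq_or_ne m 0 with rfl | hm
    · simp
    rw [tsum_geometric_of_norm_lt_one (by simpa using pow_lt_one₀ (norm_nonneg q) hq hm),
      div_mul_eq_div_div, div_eq_mul_inv (x ^ m / m)]
  calc ∑' i : ℕ, log (1 - x * q ^ i) = -∑' i : ℕ, ∑' m : ℕ, (x * q ^ i) ^ m / m := by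
        rw [← tsum_neg]
        refine tsum_congr fun i => ?_
        rw [(hasSum_taylorSeries_neg_log (norm_mul_pow_lt_one hx hq.le i)).tsum_eq, neg_neg]
    _ = -∑' m : ℕ, x ^ m / (m * (1 - q ^ m)) := by rw [← hdouble.tsum_comm, tsum_congr hinner]

lemma qPochInf_eq_exp_neg_tsum {x q : ℂ} (hx : ‖x‖ < 1) (hq : ‖q‖ < 1) :
    qPochInf x q = exp (-∑' m : ℕ, x ^ m / (m * (1 - q ^ m))) := by
  have hne (i : ℕ) : 1 - x * q ^ i ≠ 0 :=
    sub_ne_zero.mpr fun h => by simpa [← h] using norm_mul_pow_lt_one hx hq.le i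
  rw [← tsum_log_one_sub_mul_pow hx hq]
  exact (cexp_tsum_eq_tprod hne
    ((summable_geometric_of_norm_lt_one hq).mul_left x).clog_one_sub).symm

lemma qPochInf_div_qPochInf {x y q : ℂ} (hx : ‖x‖ < 1) (hy : ‖y‖ < 1) (hq : ‖q‖ < 1) :
    qPochInf x q / qPochInf y q = exp (∑' m : ℕ, (y ^ m - x ^ m) / (m * (1 - q ^ m))) := by
  rw [qPochInf_eq_exp_neg_tsum hx hq, qPochInf_eq_exp_neg_tsum hy hq, ← exp_sub, neg_sub_neg,
    ← (summable_pow_div_mul_one_sub_pow hy hq).tsum_sub (summable_pow_div_mul_one_sub_pow hx hq)]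
  simp_rw [sub_div]

lemma tendsto_div_nhdsNE_of_hasDerivAt {𝕜 𝕜' : Type*} [NontriviallyNormedField 𝕜]
    [NormedField 𝕜'] [NormedAlgebra 𝕜 𝕜'] {f g : 𝕜 → 𝕜'} {f' g' : 𝕜'} {x : 𝕜}
    (hf : HasDerivAt f f' x) (hg : HasDerivAt g g' x) (hfx : f x = 0) (hgx : g x = 0)
    (hg' : g' ≠ 0) :
    Tendsto (fun y => f y / g y) (𝓝[≠] x) (𝓝 (f' / g')) := by
  refine ((hasDerivAt_iff_tendsto_slope.mp hf).div (hasDerivAt_iff_tendsto_slope.mp hg)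
    hg').congr' ?_
  filter_upwards [self_mem_nhdsWithin] with y hy
  have : algebraMap 𝕜 𝕜' (y - x)⁻¹ ≠ 0 := by simpa [sub_eq_zero] using hy
  rw [Pi.div_apply, slope_def_module, slope_def_module, hfx, hgx, sub_zero, sub_zero,
    Algebra.smul_def, Algebra.smul_def]
  exact mul_div_mul_left _ _ this

lemma hasDerivAt_ofReal_cpow_const_one (c : ℂ) : HasDerivAt (fun p : ℝ => (p : ℂ) ^ c) c 1 := by
  simpa using
    (hasStrictDerivAt_cpow_const (c := c) one_mem_slitPlane).hasDerivAt.comp_ofReal (z := 1)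

noncomputable def cpowDiffQuot (a b : ℂ) (p : ℝ) : ℂ := ((p : ℂ) ^ b - (p : ℂ) ^ a) / (1 - p)

lemma tendsto_cpowDiffQuot (a b : ℂ) : Tendsto (cpowDiffQuot a b) (𝓝[≠] 1) (𝓝 (a - b)) := by
  have h := tendsto_div_nhdsNE_of_hasDerivAt
    ((hasDerivAt_ofReal_cpow_const_one b).sub (hasDerivAt_ofReal_cpow_const_one a))
    ((hasDerivAt_const (1 : ℝ) (1 : ℂ)).sub (hasDerivAt_id (1 : ℝ)).ofReal_comp)
    (by simp) (by simp) (by norm_num)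
  rwa [show (b - a) / (0 - ((1 : ℝ) : ℂ)) = a - b by push_cast; ring] at h

lemma norm_ofReal_cpow_le {p : ℝ} (hp0 : 0 < p) (hp1 : p ≤ 1) {c : ℂ} {K : ℝ} (hc : ‖c‖ ≤ K) :
    ‖(p : ℂ) ^ c‖ ≤ p ^ (-K) := by
  rw [norm_cpow_eq_rpow_re_of_pos hp0]
  exact Real.rpow_le_rpow_of_exponent_ge hp0 hp1 (by linarith [neg_abs_le c.re, abs_re_le_norm c])

lemma norm_ofReal_cpow_sub_one_le {p : ℝ} (hp0 : 0 < p) (hp1 : p ≤ 1) (c : ℂ) :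
    ‖(p : ℂ) ^ c - 1‖ ≤ ‖c‖ * p ^ (-(‖c‖ + 1)) * (1 - p) := by
  have hlog : ‖(Real.log p : ℂ)‖ = -Real.log p := by
    rw [norm_real, Real.norm_eq_abs, abs_of_nonpos (Real.log_nonpos hp0.le hp1)]
  have hlog_le : -Real.log p ≤ p ^ (-1 : ℝ) * (1 - p) := by
    rw [← Real.log_inv, Real.rpow_neg_one]
    have := Real.log_le_sub_one_of_pos (inv_pos.mpr hp0)
    rwa [mul_one_sub, inv_mul_cancel₀ hp0.ne']
  calc ‖(p : ℂ) ^ c - 1‖ = ‖exp (c * Real.log p) - 1‖ := by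
        rw [cpow_def_of_ne_zero (ofReal_ne_zero.mpr hp0.ne'), ofReal_log hp0.le, mul_comm]
    _ ≤ ‖c‖ * -Real.log p * p ^ (-‖c‖) := by
        have := norm_exp_sub_sum_le_norm_mul_exp (c * Real.log p) 1
        rw [Finset.sum_range_one, pow_zero, Nat.factorial_zero, Nat.cast_one, div_one, pow_one,
          norm_mul, hlog] at this
        rw [Real.rpow_def_of_pos hp0]
        convert this using 3; ring
    _ ≤ ‖c‖ * (p ^ (-1 : ℝ) * (1 - p)) * p ^ (-‖c‖) := by gcongr
    _ = ‖c‖ * p ^ (-(‖c‖ + 1)) * (1 - p) := by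
        rw [neg_add, Real.rpow_add hp0]; ring

lemma norm_cpowDiffQuot_le {p : ℝ} (hp0 : 0 < p) (hp1 : p ≤ 1) (a b : ℂ) :
    ‖cpowDiffQuot a b p‖ ≤ ‖b - a‖ * p ^ (-(‖a‖ + ‖b - a‖ + 1)) := by
  rcases hp1.eq_or_lt with rfl | hp1'
  · simp [cpowDiffQuot]
  have hp : (p : ℂ) ≠ 0 := ofReal_ne_zero.mpr hp0.ne'
  have hden : ‖1 - (p : ℂ)‖ = 1 - p := by
    rw [← ofReal_one, ← ofReal_sub, norm_real, Real.norm_eq_abs, abs_of_pos (by linarith)]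
  rw [cpowDiffQuot, norm_div, hden, div_le_iff₀ (by linarith),
    show (p : ℂ) ^ b - (p : ℂ) ^ a = (p : ℂ) ^ a * ((p : ℂ) ^ (b - a) - 1) by
      rw [mul_sub, ← cpow_add _ _ hp, add_sub_cancel, mul_one], norm_mul]
  calc ‖(p : ℂ) ^ a‖ * ‖(p : ℂ) ^ (b - a) - 1‖
      ≤ p ^ (-‖a‖) * (‖b - a‖ * p ^ (-(‖b - a‖ + 1)) * (1 - p)) := by
        gcongr
        · exact norm_ofReal_cpow_le hp0 hp1 le_rfl
        · exact norm_ofReal_cpow_sub_one_le hp0 hp1 _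
    _ = ‖b - a‖ * p ^ (-(‖a‖ + ‖b - a‖ + 1)) * (1 - p) := by
        rw [show -(‖a‖ + ‖b - a‖ + 1) = -‖a‖ + -(‖b - a‖ + 1) by ring, Real.rpow_add hp0]; ring

lemma ofReal_pow_cpow {q : ℝ} (hq : 0 ≤ q) (m : ℕ) (c : ℂ) :
    ((q ^ m : ℝ) : ℂ) ^ c = ((q : ℂ) ^ c) ^ m := by
  have harg : (m : ℝ) * (q : ℂ).arg = 0 := by rw [arg_ofReal_of_nonneg hq, mul_zero]
  have hlt : -Real.pi < (m : ℝ) * (q : ℂ).arg := by rw [harg]; linarith [Real.pi_pos]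
  have hle : (m : ℝ) * (q : ℂ).arg ≤ Real.pi := by rw [harg]; exact Real.pi_pos.le
  rw [ofReal_pow, ← cpow_nat_mul' hlt hle, cpow_nat_mul]

lemma qPochInf_div_qPochInf_eq_exp_tsum_cpowDiffQuot {q : ℝ} (hq0 : 0 < q) (hq1 : q < 1)
    {a b v : ℂ} (hv : ‖v‖ * q ^ (-(‖a‖ + ‖b - a‖ + 1)) < 1) :
    qPochInf ((q : ℂ) ^ a * v) q / qPochInf ((q : ℂ) ^ b * v) q
      = exp (∑' m : ℕ, v ^ m / m * cpowDiffQuot a b (q ^ m)) := by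
  have hdisk {c : ℂ} (hc : ‖c‖ ≤ ‖a‖ + ‖b - a‖ + 1) : ‖(q : ℂ) ^ c * v‖ < 1 := by
    rw [norm_mul, mul_comm]
    exact (mul_le_mul_of_nonneg_left (norm_ofReal_cpow_le hq0 hq1.le hc)
      (norm_nonneg v)).trans_lt hv
  have hq : ‖(q : ℂ)‖ < 1 := by rwa [norm_real, Real.norm_of_nonneg hq0.le]
  rw [qPochInf_div_qPochInf (hdisk (by linarith [norm_nonneg (b - a)]))
    (hdisk (by linarith [norm_le_insert' b a])) hq]
  congr 1
  refine tsum_congr fun m => ?_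
  rw [cpowDiffQuot, ofReal_pow_cpow hq0.le, ofReal_pow_cpow hq0.le, mul_pow, mul_pow, ofReal_pow,
    ← div_div]
  ring

lemma tendsto_pow_nhdsLT_one_nhdsNE {m : ℕ} (hm : m ≠ 0) :
    Tendsto (fun q : ℝ => q ^ m) (𝓝[<] 1) (𝓝[≠] 1) := by
  refine tendsto_nhdsWithin_iff.mpr ⟨?_, ?_⟩
  · simpa using (((continuous_pow m).tendsto (1 : ℝ)).mono_left nhdsWithin_le_nhds :
      Tendsto (fun q : ℝ => q ^ m) (𝓝[<] 1) (𝓝 (1 ^ m)))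
  · filter_upwards [Ioo_mem_nhdsLT one_pos] with q hq
    exact (pow_lt_one₀ hq.1.le hq.2 hm).ne

lemma tendsto_pow_div_mul_cpowDiffQuot {u : ℝ → ℂ} {v₀ : ℂ} (hu : Tendsto u (𝓝[<] 1) (𝓝 v₀))
    (a b : ℂ) (m : ℕ) :
    Tendsto (fun q => u q ^ m / m * cpowDiffQuot a b (q ^ m)) (𝓝[<] 1)
      (𝓝 (v₀ ^ m / m * (a - b))) := by
  rcases eq_or_ne m 0 with rfl | hm
  · simp
  exact ((hu.pow m).div_const _).mul ((tendsto_cpowDiffQuot a b).comp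
    (tendsto_pow_nhdsLT_one_nhdsNE hm))

lemma norm_pow_div_mul_cpowDiffQuot_le {q : ℝ} (hq0 : 0 < q) (hq1 : q ≤ 1) (v a b : ℂ) (m : ℕ) :
    ‖v ^ m / m * cpowDiffQuot a b (q ^ m)‖
      ≤ ‖b - a‖ * (‖v‖ * q ^ (-(‖a‖ + ‖b - a‖ + 1))) ^ m := by
  rcases eq_or_ne m 0 with rfl | hm
  · simp
  have hm1 : (1 : ℝ) ≤ m := by exact_mod_cast Nat.one_le_iff_ne_zero.mpr hm
  rw [norm_mul, norm_div, norm_pow, norm_natCast, mul_pow, Real.rpow_pow_comm hq0.le]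
  calc ‖v‖ ^ m / m * ‖cpowDiffQuot a b (q ^ m)‖
      ≤ ‖v‖ ^ m * (‖b - a‖ * (q ^ m) ^ (-(‖a‖ + ‖b - a‖ + 1))) := by
        gcongr
        · exact div_le_self (by positivity) hm1
        · exact norm_cpowDiffQuot_le (by positivity) (pow_le_one₀ hq0.le hq1) a b
    _ = _ := by ring

theorem stmt0 (a b : ℂ) (u : ℝ → ℂ) (u₀ : ℝ) (hu₀ : 0 < u₀) (hu₁ : u₀ < 1)
    (hu : Tendsto u (𝓝[<] (1 : ℝ)) (𝓝 (u₀ : ℂ))) :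
    Tendsto (fun q : ℝ =>
        qPochInf ((q : ℂ) ^ a * u q) (q : ℂ) / qPochInf ((q : ℂ) ^ b * u q) (q : ℂ))
      (𝓝[<] (1 : ℝ)) (𝓝 ((1 - (u₀ : ℂ)) ^ (b - a))) := by
  set K := ‖a‖ + ‖b - a‖ + 1
  obtain ⟨ρ, hu₀ρ, hρ1⟩ := exists_between hu₁
  have hradius : Tendsto (fun q : ℝ => ‖u q‖ * q ^ (-K)) (𝓝[<] 1) (𝓝 u₀) := by
    simpa [abs_of_pos hu₀] using hu.norm.mul
      ((Real.continuousAt_rpow_const 1 (-K) (Or.inl one_ne_zero)).tendsto.mono_left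
        nhdsWithin_le_nhds)
  have hnear : ∀ᶠ q in 𝓝[<] 1, q ∈ Set.Ioo 0 1 ∧ ‖u q‖ * q ^ (-K) < ρ :=
    Eventually.and (Ioo_mem_nhdsLT one_pos) (hradius.eventually_lt_const hu₀ρ)
  have hratio : ∀ᶠ q in 𝓝[<] 1, exp (∑' m : ℕ, u q ^ m / m * cpowDiffQuot a b (q ^ m))
      = qPochInf ((q : ℂ) ^ a * u q) q / qPochInf ((q : ℂ) ^ b * u q) q := by
    filter_upwards [hnear] with q ⟨hq, hqu⟩
    exact (qPochInf_div_qPochInf_eq_exp_tsum_cpowDiffQuot hq.1 hq.2 (hqu.trans hρ1)).symm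
  have hsum : Tendsto (fun q => ∑' m : ℕ, u q ^ m / m * cpowDiffQuot a b (q ^ m)) (𝓝[<] 1)
      (𝓝 (∑' m : ℕ, (u₀ : ℂ) ^ m / m * (a - b))) := by
    refine tendsto_tsum_of_dominated_convergence (bound := fun m => ‖b - a‖ * ρ ^ m)
      ((summable_geometric_of_lt_one (by linarith) hρ1).mul_left _)
      (tendsto_pow_div_mul_cpowDiffQuot hu a b) ?_
    filter_upwards [hnear] with q ⟨hq, hqu⟩ m
    exact (norm_pow_div_mul_cpowDiffQuot_le hq.1 hq.2.le _ a b m).trans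
      (by gcongr; exact mul_nonneg (norm_nonneg _) (Real.rpow_nonneg hq.1.le _))
  have hlog : ∑' m : ℕ, (u₀ : ℂ) ^ m / m * (a - b) = log (1 - u₀) * (b - a) := by
    have hu₀' : ‖(u₀ : ℂ)‖ < 1 := by rwa [norm_real, Real.norm_of_nonneg hu₀.le]
    rw [tsum_mul_right, (hasSum_taylorSeries_neg_log hu₀').tsum_eq]
    ring
  rw [cpow_def_of_ne_zero (by exact_mod_cast (sub_pos.mpr hu₁).ne'), ← hlog]
  exact ((continuous_exp.tendsto _).comp hsum).congr' hratio
end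

section
/- For any complex x not equal to 0, -1, -2, ..., the limit as q→1⁻ of ((q;q)_∞ / (q^x;q)_∞) · (1-q)^{1-x} equals Γ(x). -/
/-!
Write `[a]_q = (1 - q^a) / (1 - q)`, so that `[a]_q → a` as `q → 1⁻`. Both sides are limits, as
`K → ∞`, of partial products `P_K = ∏_{n<K} a_{n+1} / b_n · a_K^(x-1)`: Gauss's formula for
`Γ(x)` has `a_n = n`, `b_n = n + x`, and the `q`-expression has `a_n = [n]_q`, `b_n = [n + x]_q`.
In logarithms, `log P_K = log P_N + ∑_{N ≤ n < K} w_n` with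
`w_n = x log a_{n+1} - log b_n - (x-1) log a_n`. For fixed `N` the head `P_N` converges as
`q → 1⁻` because `[a]_q → a`. For `n > max 1 |x|` the `q`-terms satisfy
`|w_n| ≤ (|x| + |x|²) / (n - max 1 |x|)²` uniformly in `q` (expand each `log (1 - q^a)` in powers
of `q^a`), so the tails converge by dominated convergence.
-/

open Filter Topology

open Finset Complex

section EulerLog

variable (x : ℂ) (a b : ℕ → ℂ)

noncomputable def eulerLogPartial (K : ℕ) : ℂ :=
  ∑ n ∈ range K, (log (a (n + 1)) - log (b n)) + (x - 1) * log (a K)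

noncomputable def eulerLogTerm (n : ℕ) : ℂ :=
  x * log (a (n + 1)) - log (b n) - (x - 1) * log (a n)

theorem eulerLogPartial_add (N M : ℕ) :
    eulerLogPartial x a b (M + N) =
      eulerLogPartial x a b N + ∑ m ∈ range M, eulerLogTerm x a b (m + N) := by
  induction M with
  | zero => simp
  | succ M ih =>
    simp only [eulerLogPartial, eulerLogTerm] at ih ⊢
    rw [add_right_comm, sum_range_succ, sum_range_succ]
    linear_combination ih

variable {x a b}

theorem exp_eulerLogPartial (ha : ∀ n, a (n + 1) ≠ 0) (hb : ∀ n, b n ≠ 0) {K : ℕ}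
    (hK : a K ≠ 0) :
    exp (eulerLogPartial x a b K) = (∏ n ∈ range K, a (n + 1) / b n) * a K ^ (x - 1) := by
  rw [eulerLogPartial, exp_add, exp_sum, cpow_def_of_ne_zero hK, mul_comm (x - 1)]
  congr 1
  exact prod_congr rfl fun n _ => by rw [exp_sub, exp_log (ha n), exp_log (hb n)]

theorem eq_exp_eulerLogPartial_mul_exp {L : ℂ}
    (hL : Tendsto (fun K => exp (eulerLogPartial x a b K)) atTop (𝓝 L)) (N : ℕ) {T : ℂ}
    (hT : HasSum (fun m => eulerLogTerm x a b (m + N)) T) :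
    L = exp (eulerLogPartial x a b N) * exp T := by
  have hshift : Tendsto (fun M => exp (eulerLogPartial x a b (M + N))) atTop
      (𝓝 (exp (eulerLogPartial x a b N + T))) := by
    simp_rw [eulerLogPartial_add]
    exact (continuous_exp.tendsto _).comp (hT.tendsto_sum_nat.const_add _)
  rw [← exp_add]
  exact tendsto_nhds_unique (hL.comp (tendsto_add_atTop_nat N)) hshift

end EulerLog

section Gauss

variable {x : ℂ}

theorem exp_eulerLogPartial_natCast (hx : ∀ n : ℕ, x ≠ -n) {K : ℕ} (hK : K ≠ 0) :
    exp (eulerLogPartial x (fun n => n) (fun n => n + x) K) = GammaSeq x K * ((x + K) / K) := by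
  have hxn (n : ℕ) : (n : ℂ) + x ≠ 0 := fun h => hx n (by linear_combination h)
  have hKC : (K : ℂ) ≠ 0 := Nat.cast_ne_zero.mpr hK
  rw [exp_eulerLogPartial (fun n => Nat.cast_ne_zero.mpr n.succ_ne_zero) hxn hKC, GammaSeq,
    prod_div_distrib, prod_range_succ, cpow_sub _ _ hKC, cpow_one, ← Nat.cast_prod,
    prod_range_add_one_eq_factorial]
  have hprod : ∏ n ∈ range K, ((n : ℂ) + x) ≠ 0 := prod_ne_zero_iff.mpr fun n _ => hxn n
  simp_rw [add_comm x]
  field_simp [hxn K]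

theorem tendsto_exp_eulerLogPartial_natCast (hx : ∀ n : ℕ, x ≠ -n) :
    Tendsto (fun K => exp (eulerLogPartial x (fun n => n) (fun n => n + x) K)) atTop
      (𝓝 (Gamma x)) := by
  have hratio : Tendsto (fun K : ℕ => (x + K) / K) atTop (𝓝 1) := by
    have := (tendsto_const_div_atTop_nhds_zero_nat x).const_add 1
    rw [add_zero] at this
    refine this.congr' ?_
    filter_upwards [eventually_ne_atTop 0] with K hK
    field_simp [Nat.cast_ne_zero.mpr hK]
    ring
  have := (GammaSeq_tendsto_Gamma x).mul hratio
  rw [mul_one] at this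
  refine this.congr' ?_
  filter_upwards [eventually_ne_atTop 0] with K hK
  exact (exp_eulerLogPartial_natCast hx hK).symm

end Gauss

theorem summable_norm_mul_pow (c : ℂ) {q : ℂ} (hq : ‖q‖ < 1) :
    Summable fun i : ℕ => ‖-(c * q ^ i)‖ := by
  simpa [norm_mul, norm_pow] using
    (summable_geometric_of_lt_one (norm_nonneg q) hq).mul_left ‖c‖

theorem hasProd_qPochInf (c : ℂ) {q : ℂ} (hq : ‖q‖ < 1) :
    HasProd (fun i : ℕ => 1 - c * q ^ i) (qPochInf c q) := by
  simpa [qPochInf, sub_eq_add_neg] using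
    (multipliable_one_add_of_summable (summable_norm_mul_pow c hq)).hasProd

theorem qPochInf_ne_zero {c q : ℂ} (hq : ‖q‖ < 1) (hc : ∀ i : ℕ, 1 - c * q ^ i ≠ 0) :
    qPochInf c q ≠ 0 := by
  simpa [qPochInf, sub_eq_add_neg] using
    tprod_one_add_ne_zero_of_summable (by simpa [sub_eq_add_neg] using hc)
      (summable_norm_mul_pow c hq)

section QNumber

variable {x : ℂ} {q : ℝ}

noncomputable def qNumber (q : ℝ) (a : ℂ) : ℂ := (1 - (q : ℂ) ^ a) / (1 - q)

theorem tendsto_qNumber (a : ℂ) :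
    Tendsto (fun q : ℝ => qNumber q a) (𝓝[≠] 1) (𝓝 a) := by
  have hd : HasDerivAt (fun q : ℝ => (q : ℂ) ^ a) a 1 := by
    simpa using ((hasDerivAt_id (1 : ℂ)).cpow_const (c := a) (by simp)).comp_ofReal
  refine (hasDerivAt_iff_tendsto_slope.mp hd).congr' ?_
  filter_upwards [self_mem_nhdsWithin] with q hq
  have hq1 : (q : ℂ) ≠ 1 := mod_cast hq
  simp only [slope, qNumber, vsub_eq_sub, ofReal_one, one_cpow, real_smul, ofReal_inv,
    ofReal_sub]
  field_simp [sub_ne_zero.mpr hq1, sub_ne_zero.mpr hq1.symm]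
  ring

theorem norm_ofReal_cpow_lt_one (hq0 : 0 < q) (hq1 : q < 1) {a : ℂ} (ha : 0 < a.re) :
    ‖(q : ℂ) ^ a‖ < 1 := by
  rw [norm_cpow_eq_rpow_re_of_pos hq0]
  exact Real.rpow_lt_one hq0.le hq1 ha

theorem one_sub_ofReal_cpow_ne_zero (hq0 : 0 < q) (hq1 : q < 1) {a : ℂ} (ha : 0 < a.re) :
    1 - (q : ℂ) ^ a ≠ 0 :=
  sub_ne_zero.mpr fun h => by simpa [← h] using norm_ofReal_cpow_lt_one hq0 hq1 ha

theorem qNumber_ne_zero (hq0 : 0 < q) (hq1 : q < 1) {a : ℂ} (ha : 0 < a.re) :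
    qNumber q a ≠ 0 :=
  div_ne_zero (one_sub_ofReal_cpow_ne_zero hq0 hq1 ha) (sub_ne_zero.mpr (mod_cast hq1.ne'))

theorem qNumber_natCast_ne_zero (hq0 : 0 < q) (hq1 : q < 1) {n : ℕ} (hn : n ≠ 0) :
    qNumber q n ≠ 0 :=
  qNumber_ne_zero hq0 hq1 (by rw [natCast_re]; exact Nat.cast_pos.mpr (Nat.pos_of_ne_zero hn))

theorem ofReal_cpow_natCast_add (hq0 : 0 < q) (n : ℕ) (a : ℂ) :
    (q : ℂ) ^ ((n : ℂ) + a) = (q : ℂ) ^ a * (q : ℂ) ^ n := by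
  rw [cpow_add _ _ (mod_cast hq0.ne'), cpow_natCast, mul_comm]

theorem log_qNumber (hq1 : q < 1) {a : ℂ} (ha : 1 - (q : ℂ) ^ a ≠ 0) :
    log (qNumber q a) = log (1 - (q : ℂ) ^ a) - Real.log (1 - q) := by
  have h : qNumber q a = ((1 - q)⁻¹ : ℝ) * (1 - (q : ℂ) ^ a) := by
    rw [qNumber, ofReal_inv, ofReal_sub, ofReal_one, div_eq_inv_mul]
  rw [h, log_ofReal_mul (inv_pos.mpr (sub_pos.mpr hq1)) ha, Real.log_inv, ofReal_neg]
  ring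

theorem tendsto_qNumber_natCast_cpow_atTop (hq0 : 0 < q) (hq1 : q < 1) (s : ℂ) :
    Tendsto (fun K : ℕ => qNumber q K ^ s) atTop (𝓝 ((1 - q) ^ (-s))) := by
  have hq1' : (1 : ℂ) - q = ((1 - q : ℝ) : ℂ) := by push_cast; ring
  have hbase : Tendsto (fun K : ℕ => qNumber q K) atTop (𝓝 (1 - (q : ℂ))⁻¹) := by
    have hqC : ‖(q : ℂ)‖ < 1 := by rwa [norm_real, Real.norm_of_nonneg hq0.le]
    have := ((tendsto_pow_atTop_nhds_zero_of_norm_lt_one hqC).const_sub 1).div_const (1 - (q : ℂ))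
    rw [sub_zero, ← inv_eq_one_div] at this
    simpa only [qNumber, cpow_natCast] using this
  rw [hq1'] at hbase
  have hslit : ((1 - q : ℝ) : ℂ)⁻¹ ∈ slitPlane := by
    rw [← ofReal_inv, ofReal_mem_slitPlane]; exact inv_pos.mpr (by linarith)
  have harg : arg ((1 - q : ℝ) : ℂ) ≠ Real.pi := by
    rw [arg_ofReal_of_nonneg (by linarith)]; exact Real.pi_ne_zero.symm
  have := (continuousAt_cpow_const (b := s) hslit).tendsto.comp hbase
  rwa [inv_cpow _ _ harg, ← cpow_neg, ← hq1'] at this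

theorem tendsto_exp_eulerLogPartial_qNumber_atTop (hq0 : 0 < q) (hq1 : q < 1)
    (hx : ∀ n : ℕ, qNumber q (n + x) ≠ 0) :
    Tendsto (fun K => exp (eulerLogPartial x (fun n => qNumber q n) (fun n => qNumber q (n + x)) K))
      atTop (𝓝 (qPochInf q q / qPochInf ((q : ℂ) ^ x) q * (1 - q) ^ (1 - x))) := by
  have hqC : ‖(q : ℂ)‖ < 1 := by rwa [norm_real, Real.norm_of_nonneg hq0.le]
  have hq1C : (1 : ℂ) - q ≠ 0 := sub_ne_zero.mpr (mod_cast hq1.ne')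
  have hnum : Tendsto (fun K => ∏ n ∈ range K, (1 - (q : ℂ) ^ ((n + 1 : ℕ) : ℂ))) atTop
      (𝓝 (qPochInf q q)) := by
    refine (hasProd_qPochInf q hqC).tendsto_prod_nat.congr fun K => prod_congr rfl fun n _ => ?_
    rw [cpow_natCast, pow_succ']
  have hden : Tendsto (fun K => ∏ n ∈ range K, (1 - (q : ℂ) ^ ((n : ℂ) + x))) atTop
      (𝓝 (qPochInf ((q : ℂ) ^ x) q)) := by
    refine (hasProd_qPochInf _ hqC).tendsto_prod_nat.congr fun K => prod_congr rfl fun n _ => ?_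
    rw [ofReal_cpow_natCast_add hq0]
  have hden0 : qPochInf ((q : ℂ) ^ x) q ≠ 0 := by
    refine qPochInf_ne_zero hqC fun n h => hx n ?_
    rw [qNumber, ofReal_cpow_natCast_add hq0, h, zero_div]
  have hpow := tendsto_qNumber_natCast_cpow_atTop hq0 hq1 (x - 1)
  rw [neg_sub] at hpow
  refine ((hnum.div hden hden0).mul hpow).congr' ?_
  filter_upwards [eventually_ne_atTop 0] with K hK
  rw [exp_eulerLogPartial (fun n => qNumber_natCast_ne_zero hq0 hq1 n.succ_ne_zero) hx
      (qNumber_natCast_ne_zero hq0 hq1 hK),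
    Pi.div_apply, ← prod_div_distrib]
  congr 1
  exact prod_congr rfl fun n _ => by simp only [qNumber]; rw [div_div_div_cancel_right₀ hq1C]

end QNumber

theorem norm_exp_sub_one_sub_le (z : ℂ) :
    ‖exp z - 1 - z‖ ≤ ‖z‖ ^ 2 * Real.exp ‖z‖ := by
  simpa [sum_range_succ, sub_sub] using norm_exp_sub_sum_le_norm_mul_exp z 2

theorem norm_mul_exp_sub_exp_mul_sub_le (x : ℂ) (u : ℝ) :
    ‖x * exp u - exp (x * u) - (x - 1)‖ ≤
      (‖x‖ + ‖x‖ ^ 2) * u ^ 2 * Real.exp (max 1 ‖x‖ * |u|) := by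
  have h1 := norm_exp_sub_one_sub_le u
  have h2 := norm_exp_sub_one_sub_le (x * u)
  rw [norm_real, Real.norm_eq_abs] at h1
  rw [norm_mul, norm_real, Real.norm_eq_abs] at h2
  have e1 : Real.exp |u| ≤ Real.exp (max 1 ‖x‖ * |u|) :=
    Real.exp_le_exp.2 (le_mul_of_one_le_left (abs_nonneg u) (le_max_left _ _))
  have e2 : Real.exp (‖x‖ * |u|) ≤ Real.exp (max 1 ‖x‖ * |u|) :=
    Real.exp_le_exp.2 (mul_le_mul_of_nonneg_right (le_max_right _ _) (abs_nonneg u))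
  calc ‖x * exp u - exp (x * u) - (x - 1)‖
      = ‖x * (exp u - 1 - u) - (exp (x * u) - 1 - x * u)‖ := by ring_nf
    _ ≤ ‖x‖ * ‖exp u - 1 - u‖ + ‖exp (x * u) - 1 - x * u‖ := by
      rw [← norm_mul]; exact norm_sub_le _ _
    _ ≤ ‖x‖ * (|u| ^ 2 * Real.exp (max 1 ‖x‖ * |u|))
        + (‖x‖ * |u|) ^ 2 * Real.exp (max 1 ‖x‖ * |u|) := by
      gcongr
      · exact h1.trans (by gcongr)
      · exact h2.trans (by gcongr)
    _ = (‖x‖ + ‖x‖ ^ 2) * u ^ 2 * Real.exp (max 1 ‖x‖ * |u|) := by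
      rw [mul_pow, sq_abs]; ring

theorem sq_mul_exp_neg_le_one_sub_exp_neg_sq {y : ℝ} (hy : 0 ≤ y) :
    y ^ 2 * Real.exp (-y) ≤ (1 - Real.exp (-y)) ^ 2 := by
  have hsinh := Real.self_le_sinh_iff.mpr (by positivity : 0 ≤ y / 2)
  rw [Real.sinh_eq] at hsinh
  have hcancel : Real.exp (y / 2) * Real.exp (-(y / 2)) = 1 := by rw [← Real.exp_add]; simp
  have hsq : Real.exp (-(y / 2)) ^ 2 = Real.exp (-y) := by rw [← Real.exp_nat_mul]; ring_nf
  have key : y * Real.exp (-(y / 2)) ≤ 1 - Real.exp (-y) := by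
    nlinarith [mul_le_mul_of_nonneg_right hsinh (Real.exp_pos (-(y / 2))).le]
  calc y ^ 2 * Real.exp (-y) = (y * Real.exp (-(y / 2))) ^ 2 := by rw [mul_pow, hsq]
    _ ≤ (1 - Real.exp (-y)) ^ 2 := pow_le_pow_left₀ (by positivity) key 2

theorem summable_div_natCast_add_one_sq (c : ℝ) :
    Summable fun m : ℕ => c / ((m : ℝ) + 1) ^ 2 := by
  have := ((summable_nat_add_iff 1).mpr (Real.summable_one_div_nat_pow.mpr one_lt_two)).mul_left c
  simpa [div_eq_mul_inv] using this

section Tail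

variable {x : ℂ} {q : ℝ}

theorem ne_zero_of_max_one_lt {n : ℕ} {c : ℝ} (h : max 1 c < n) : n ≠ 0 :=
  Nat.ne_zero_of_lt (Nat.one_lt_cast.mp ((le_max_left 1 c).trans_lt h))

theorem re_natCast_add_pos {n : ℕ} (hn : ‖x‖ < n) : 0 < ((n : ℂ) + x).re := by
  rw [add_re, natCast_re]
  linarith [neg_le_of_abs_le (abs_re_le_norm x)]

theorem hasSum_eulerLogTerm_qNumber (hq0 : 0 < q) (hq1 : q < 1) {n : ℕ} (hn : n ≠ 0)
    (hnx : 0 < ((n : ℂ) + x).re) :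
    HasSum (fun k : ℕ => ((q : ℂ) ^ n) ^ k *
        (x * exp ↑(k * Real.log q) - exp (x * ↑(k * Real.log q)) - (x - 1)) / k)
      (-eulerLogTerm x (fun n => qNumber q n) (fun n => qNumber q (n + x)) n) := by
  have hlt {a : ℂ} (ha : 0 < a.re) := norm_ofReal_cpow_lt_one hq0 hq1 ha
  have hne {a : ℂ} (ha : 0 < a.re) := one_sub_ofReal_cpow_ne_zero hq0 hq1 ha
  have h1 : (0 : ℝ) < ((n + 1 : ℕ) : ℂ).re := by simp only [natCast_re]; positivity
  have h0 : (0 : ℝ) < (n : ℂ).re := by simp only [natCast_re]; positivity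
  have hsum := (((hasSum_taylorSeries_neg_log (hlt h1)).mul_left x).sub
    (hasSum_taylorSeries_neg_log (hlt hnx))).sub
    ((hasSum_taylorSeries_neg_log (hlt h0)).mul_left (x - 1))
  have hvalue : -eulerLogTerm x (fun n => qNumber q n) (fun n => qNumber q (n + x)) n =
      x * -log (1 - (q : ℂ) ^ ((n + 1 : ℕ) : ℂ)) - -log (1 - (q : ℂ) ^ ((n : ℂ) + x))
        - (x - 1) * -log (1 - (q : ℂ) ^ (n : ℂ)) := by
    rw [eulerLogTerm, log_qNumber hq1 (hne h1), log_qNumber hq1 (hne hnx),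
      log_qNumber hq1 (hne h0)]
    ring
  rw [hvalue]
  refine hsum.congr_fun fun k => ?_
  have e1 : (q : ℂ) ^ k = exp ↑(k * Real.log q) := by
    rw [ofReal_mul, ofReal_natCast, exp_nat_mul, ← ofReal_exp, Real.exp_log hq0]
  have e2 : ((q : ℂ) ^ x) ^ k = exp (x * ↑(k * Real.log q)) := by
    rw [cpow_def_of_ne_zero (mod_cast hq0.ne'), ← exp_nat_mul, ← ofReal_log hq0.le]
    push_cast; ring_nf
  rw [ofReal_cpow_natCast_add hq0, cpow_natCast, cpow_natCast, pow_succ, mul_pow, mul_pow,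
    e1, e2]
  ring

theorem norm_eulerLogTerm_qNumber_summand_le (hq0 : 0 < q) (hq1 : q < 1) (n k : ℕ) :
    ‖((q : ℂ) ^ n) ^ k *
        (x * exp ↑(k * Real.log q) - exp (x * ↑(k * Real.log q)) - (x - 1)) / k‖
      ≤ (‖x‖ + ‖x‖ ^ 2) * Real.log q ^ 2 *
        (k * Real.exp ((n - max 1 ‖x‖) * Real.log q) ^ k) := by
  rcases Nat.eq_zero_or_pos k with rfl | hk
  · simp
  have hkR : (0 : ℝ) < k := Nat.cast_pos.mpr hk
  have hlog : Real.log q ≤ 0 := Real.log_nonpos hq0.le hq1.le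
  have hφ := norm_mul_exp_sub_exp_mul_sub_le x (k * Real.log q)
  rw [abs_of_nonpos (mul_nonpos_of_nonneg_of_nonpos hkR.le hlog)] at hφ
  have hqpow : (q ^ n) ^ k = Real.exp (k * (n * Real.log q)) := by
    rw [Real.exp_nat_mul, Real.exp_nat_mul, Real.exp_log hq0]
  have hgeom : Real.exp (k * (n * Real.log q)) * Real.exp (max 1 ‖x‖ * -(k * Real.log q)) =
      Real.exp ((n - max 1 ‖x‖) * Real.log q) ^ k := by
    rw [← Real.exp_add, ← Real.exp_nat_mul]; ring_nf
  rw [norm_div, norm_mul, norm_pow, norm_pow, norm_real, Real.norm_of_nonneg hq0.le, norm_natCast,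
    hqpow]
  calc Real.exp (k * (n * Real.log q)) * ‖x * exp ↑(k * Real.log q)
          - exp (x * ↑(k * Real.log q)) - (x - 1)‖ / k
      ≤ Real.exp (k * (n * Real.log q)) * ((‖x‖ + ‖x‖ ^ 2) * (k * Real.log q) ^ 2
          * Real.exp (max 1 ‖x‖ * -(k * Real.log q))) / k := by gcongr
    _ = _ := by rw [← hgeom]; field_simp

theorem norm_eulerLogTerm_qNumber_le (hq0 : 0 < q) (hq1 : q < 1) {n : ℕ}
    (hn : max 1 ‖x‖ < n) :
    ‖eulerLogTerm x (fun n => qNumber q n) (fun n => qNumber q (n + x)) n‖ ≤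
      (‖x‖ + ‖x‖ ^ 2) / (n - max 1 ‖x‖) ^ 2 := by
  set β := max 1 ‖x‖
  set C := ‖x‖ + ‖x‖ ^ 2
  have hnβ : 0 < (n : ℝ) - β := sub_pos.mpr hn
  have hlog : Real.log q < 0 := Real.log_neg hq0 hq1
  set r := Real.exp ((n - β) * Real.log q)
  have hr1 : r < 1 := Real.exp_lt_one_iff.mpr (mul_neg_of_pos_of_neg hnβ hlog)
  have hr : ‖r‖ < 1 := by rwa [Real.norm_of_nonneg (Real.exp_pos _).le]
  have hbound := tsum_of_norm_bounded ((hasSum_coe_mul_geometric_of_norm_lt_one hr).mul_left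
    (C * Real.log q ^ 2)) (norm_eulerLogTerm_qNumber_summand_le hq0 hq1 n)
  rw [(hasSum_eulerLogTerm_qNumber hq0 hq1 (ne_zero_of_max_one_lt hn)
    (re_natCast_add_pos ((le_max_right 1 ‖x‖).trans_lt hn))).tsum_eq, norm_neg] at hbound
  refine hbound.trans ?_
  have key := sq_mul_exp_neg_le_one_sub_exp_neg_sq (y := (n - β) * -Real.log q) (by nlinarith)
  rw [show -((n - β) * -Real.log q) = (n - β) * Real.log q by ring] at key
  have h1r : 0 < 1 - r := sub_pos.mpr hr1
  calc C * Real.log q ^ 2 * (r / (1 - r) ^ 2)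
      = C * (((n - β) * -Real.log q) ^ 2 * r / (1 - r) ^ 2) / (n - β) ^ 2 := by field_simp
    _ ≤ C * 1 / (n - β) ^ 2 := by gcongr; exact (div_le_one (by positivity)).mpr key
    _ = C / (n - β) ^ 2 := by rw [mul_one]

theorem tendsto_eulerLogTerm_qNumber {n : ℕ} (hn : n ≠ 0) (hnx : 0 < ((n : ℂ) + x).re) :
    Tendsto (fun q : ℝ => eulerLogTerm x (fun n => qNumber q n) (fun n => qNumber q (n + x)) n)
      (𝓝[<] 1) (𝓝 (eulerLogTerm x (fun n => n) (fun n => n + x) n)) := by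
  have hlog {a : ℂ} (ha : a ∈ slitPlane) :
      Tendsto (fun q : ℝ => log (qNumber q a)) (𝓝[<] 1) (𝓝 (log a)) :=
    (continuousAt_clog ha).tendsto.comp ((tendsto_qNumber a).mono_left (nhdsLT_le_nhdsNE 1))
  exact (((hlog (natCast_mem_slitPlane.mpr n.succ_ne_zero)).const_mul x).sub
    (hlog (mem_slitPlane_iff.mpr (Or.inl hnx)))).sub
    ((hlog (natCast_mem_slitPlane.mpr hn)).const_mul (x - 1))

theorem eventually_norm_eulerLogTerm_qNumber_add_le {N : ℕ} (hN : max 1 ‖x‖ + 1 ≤ N) :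
    ∀ᶠ q : ℝ in 𝓝[<] 1, ∀ m : ℕ,
      ‖eulerLogTerm x (fun n => qNumber q n) (fun n => qNumber q (n + x)) (m + N)‖ ≤
        (‖x‖ + ‖x‖ ^ 2) / ((m : ℝ) + 1) ^ 2 := by
  filter_upwards [Ioo_mem_nhdsLT zero_lt_one] with q hq m
  refine (norm_eulerLogTerm_qNumber_le hq.1 hq.2 (by push_cast; linarith)).trans ?_
  gcongr
  push_cast
  linarith

theorem tendsto_eulerLogTerm_qNumber_add {N : ℕ} (hN : max 1 ‖x‖ + 1 ≤ N) (m : ℕ) :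
    Tendsto (fun q : ℝ =>
        eulerLogTerm x (fun n => qNumber q n) (fun n => qNumber q (n + x)) (m + N))
      (𝓝[<] 1) (𝓝 (eulerLogTerm x (fun n => n) (fun n => n + x) (m + N))) := by
  have hmN : max 1 ‖x‖ < ((m + N : ℕ) : ℝ) := by push_cast; linarith
  exact tendsto_eulerLogTerm_qNumber (ne_zero_of_max_one_lt hmN)
    (re_natCast_add_pos ((le_max_right 1 ‖x‖).trans_lt hmN))

theorem norm_eulerLogTerm_natCast_add_le {N : ℕ} (hN : max 1 ‖x‖ + 1 ≤ N) (m : ℕ) :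
    ‖eulerLogTerm x (fun n => n) (fun n => n + x) (m + N)‖ ≤
      (‖x‖ + ‖x‖ ^ 2) / ((m : ℝ) + 1) ^ 2 :=
  le_of_tendsto ((continuous_norm.tendsto _).comp (tendsto_eulerLogTerm_qNumber_add hN m))
    ((eventually_norm_eulerLogTerm_qNumber_add_le hN).mono fun _ h => h m)

theorem tendsto_tsum_eulerLogTerm_qNumber {N : ℕ} (hN : max 1 ‖x‖ + 1 ≤ N) :
    Tendsto (fun q : ℝ =>
        ∑' m, eulerLogTerm x (fun n => qNumber q n) (fun n => qNumber q (n + x)) (m + N))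
      (𝓝[<] 1) (𝓝 (∑' m, eulerLogTerm x (fun n => n) (fun n => n + x) (m + N))) :=
  tendsto_tsum_of_dominated_convergence (summable_div_natCast_add_one_sq _)
    (tendsto_eulerLogTerm_qNumber_add hN) (eventually_norm_eulerLogTerm_qNumber_add_le hN)

theorem eventually_qNumber_natCast_add_ne_zero (hx : ∀ n : ℕ, x ≠ -n) :
    ∀ᶠ q : ℝ in 𝓝[<] 1, ∀ n : ℕ, qNumber q (n + x) ≠ 0 := by
  obtain ⟨N, hN⟩ := exists_nat_gt ‖x‖
  have hsmall : ∀ n ∈ range N, ∀ᶠ q : ℝ in 𝓝[<] 1, qNumber q (n + x) ≠ 0 :=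
    fun n _ => ((tendsto_qNumber _).mono_left (nhdsLT_le_nhdsNE 1)).eventually_ne
      fun h => hx n (by linear_combination h)
  filter_upwards [Ioo_mem_nhdsLT zero_lt_one, (range N).eventually_all.mpr hsmall]
    with q hq hq_small n
  by_cases hn : n < N
  · exact hq_small n (mem_range.mpr hn)
  · exact qNumber_ne_zero hq.1 hq.2 (re_natCast_add_pos (hN.trans_le (mod_cast not_lt.mp hn)))

theorem tendsto_exp_eulerLogPartial_qNumber_nhdsLT_one (hx : ∀ n : ℕ, x ≠ -n) {N : ℕ}
    (hN : N ≠ 0) :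
    Tendsto (fun q : ℝ =>
        exp (eulerLogPartial x (fun n => qNumber q n) (fun n => qNumber q (n + x)) N))
      (𝓝[<] 1) (𝓝 (exp (eulerLogPartial x (fun n => n) (fun n => n + x) N))) := by
  have hxn (n : ℕ) : (n : ℂ) + x ≠ 0 := fun h => hx n (by linear_combination h)
  have hlim (a : ℂ) := (tendsto_qNumber a).mono_left (nhdsLT_le_nhdsNE 1)
  have hprod := tendsto_finsetProd (range N) fun n _ =>
    (hlim ((n + 1 : ℕ) : ℂ)).div (hlim (n + x)) (hxn n)
  have hpow := (continuousAt_cpow_const (b := x - 1) (natCast_mem_slitPlane.mpr hN)).tendsto.comp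
    (hlim N)
  rw [exp_eulerLogPartial (fun n => Nat.cast_ne_zero.mpr n.succ_ne_zero) hxn
    (Nat.cast_ne_zero.mpr hN)]
  refine (hprod.mul hpow).congr' ?_
  filter_upwards [Ioo_mem_nhdsLT zero_lt_one, eventually_qNumber_natCast_add_ne_zero hx]
    with q hq hqx
  rw [exp_eulerLogPartial (fun n => qNumber_natCast_ne_zero hq.1 hq.2 n.succ_ne_zero) hqx
    (qNumber_natCast_ne_zero hq.1 hq.2 hN)]
  rfl

end Tail

theorem stmt1 (x : ℂ) (hx : ∀ n : ℕ, x ≠ -(n : ℂ)) :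
    Tendsto (fun q : ℝ =>
        qPochInf (q : ℂ) (q : ℂ) / qPochInf ((q : ℂ) ^ x) (q : ℂ)
          * (1 - (q : ℂ)) ^ ((1 : ℂ) - x))
      (𝓝[<] (1 : ℝ)) (𝓝 (Complex.Gamma x)) := by
  obtain ⟨N, hN⟩ := exists_nat_ge (max 1 ‖x‖ + 1)
  have hN0 : N ≠ 0 := ne_zero_of_max_one_lt (c := ‖x‖) (by linarith)
  have hsum := (summable_div_natCast_add_one_sq _).of_norm_bounded
    (norm_eulerLogTerm_natCast_add_le hN)
  rw [eq_exp_eulerLogPartial_mul_exp (tendsto_exp_eulerLogPartial_natCast hx) N hsum.hasSum]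
  refine ((tendsto_exp_eulerLogPartial_qNumber_nhdsLT_one hx hN0).mul
    ((continuous_exp.tendsto _).comp (tendsto_tsum_eulerLogTerm_qNumber hN))).congr' ?_
  filter_upwards [Ioo_mem_nhdsLT zero_lt_one, eventually_qNumber_natCast_add_ne_zero hx,
    eventually_norm_eulerLogTerm_qNumber_add_le hN] with q hq hqx hbound
  exact (eq_exp_eulerLogPartial_mul_exp (tendsto_exp_eulerLogPartial_qNumber_atTop hq.1 hq.2 hqx)
    N ((summable_div_natCast_add_one_sq _).of_norm_bounded hbound).hasSum).symm
end

section
/- Let a, b, c > 0 with a ≠ c. Then for every complex u on the circle with center a(b+c)/(a-c) and radius √(ac(a+b)(b+c))/|a-c| (and with u ≠ -a, u ≠ b+c), the value u/(u+a) · (u-b)/(u-b-c) is real. -/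
/-!
Write `u = x + iy`. Clearing the denominators of `u(u - b) / ((u + a)(u - b - c))` against the
conjugate, its imaginary part is `y` times the real quadratic
`(a - c)|u|² - 2a(b + c)x + ab(b + c)`, and since `k² - r² = ab(b + c)/(a - c)` for the stated
center `k` and radius `r`, this quadratic is `(a - c)(|u - k|² - r²)`, which vanishes on the circle.
-/

open ComplexConjugate

lemma Complex.im_div_eq_zero_of_im_mul_conj_eq_zero {z w : ℂ} (h : (z * conj w).im = 0) :
    (z / w).im = 0 := by
  rw [div_eq_mul_inv, Complex.inv_def, ← mul_assoc, Complex.im_mul_ofReal, h, zero_mul]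

lemma Complex.sq_norm_sub_ofReal (u : ℂ) (k : ℝ) : ‖u - k‖ ^ 2 = (u.re - k) ^ 2 + u.im ^ 2 := by
  rw [Complex.sq_norm, Complex.normSq_apply]
  simp only [Complex.sub_re, Complex.sub_im, Complex.ofReal_re, Complex.ofReal_im, sub_zero]
  ring

lemma im_mul_conj_eq_im_mul_circleForm (a b c : ℝ) (u : ℂ) :
    (u * (u - b) * conj ((u + a) * (u - b - c))).im
      = u.im * ((a - c) * Complex.normSq u - 2 * a * (b + c) * u.re + a * b * (b + c)) := by
  simp only [Complex.mul_im, Complex.mul_re, Complex.conj_re, Complex.conj_im, Complex.add_re,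
    Complex.add_im, Complex.sub_re, Complex.sub_im, Complex.ofReal_re, Complex.ofReal_im,
    Complex.normSq_apply]
  ring

lemma circleForm_eq_zero_of_norm_sub_eq {a b c : ℝ} (habc : 0 ≤ a * c * (a + b) * (b + c))
    (hac : a ≠ c) {u : ℂ}
    (hcirc : ‖u - ((a * (b + c) / (a - c) : ℝ) : ℂ)‖
      = Real.sqrt (a * c * (a + b) * (b + c)) / |a - c|) :
    (a - c) * Complex.normSq u - 2 * a * (b + c) * u.re + a * b * (b + c) = 0 := by
  have hac' : a - c ≠ 0 := sub_ne_zero.mpr hac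
  have hsq := congrArg (· ^ 2) hcirc
  simp only [Complex.sq_norm_sub_ofReal, div_pow, sq_abs, Real.sq_sqrt habc] at hsq
  rw [Complex.normSq_apply]
  field_simp at hsq
  apply mul_left_cancel₀ hac'
  linear_combination hsq

theorem stmt7_general (a b c : ℝ) (ha : 0 < a) (hb : 0 < b) (hc : 0 < c) (hac : a ≠ c)
    (u : ℂ)
    (hcirc : ‖u - ((a * (b + c) / (a - c) : ℝ) : ℂ)‖
      = Real.sqrt (a * c * (a + b) * (b + c)) / |a - c|) :
    (u / (u + (a : ℂ)) * ((u - (b : ℂ)) / (u - (b : ℂ) - (c : ℂ)))).im = 0 := by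
  rw [div_mul_div_comm]
  apply Complex.im_div_eq_zero_of_im_mul_conj_eq_zero
  rw [im_mul_conj_eq_im_mul_circleForm,
    circleForm_eq_zero_of_norm_sub_eq (by positivity) hac hcirc, mul_zero]

theorem stmt7 (a b c : ℝ) (ha : 0 < a) (hb : 0 < b) (hc : 0 < c) (hac : a ≠ c)
    (u : ℂ)
    (hcirc : ‖u - ((a * (b + c) / (a - c) : ℝ) : ℂ)‖
      = Real.sqrt (a * c * (a + b) * (b + c)) / |a - c|)
    (hu₁ : u ≠ -(a : ℂ)) (hu₂ : u ≠ (b : ℂ) + (c : ℂ)) :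
    (u / (u + (a : ℂ)) * ((u - (b : ℂ)) / (u - (b : ℂ) - (c : ℂ)))).im = 0 :=
  stmt7_general a b c ha hb hc hac u hcirc
end

section
/- Consistency of the Jacobi corners transition kernels for n = 2: for 0 < z < 1 and θ > 0, α > 0, M ≥ 2, the integral over 0 < y₁ < z < y₂ < 1 of (y₁y₂)^θ (y₂-y₁)^{1-2θ} |y₂ - z|^{θ-1} |z - y₁|^{θ-1} z^{-2θ} · (y₂-y₁)^{2θ} (y₁y₂)^{θα - 1} ((1-y₁)(1-y₂))^{θ|M-2|+θ-1} dy₁ dy₂ is equal to a constant (independent of z) times z^{θα-1} (1-z)^{θ(M-1)+θ-1}. -/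
/-!
The substitution `u = y₁ y₂ / z`, `v = (1 - y₁)(1 - y₂) / (1 - z)` maps the interlacing region
`0 < y₁ < z < y₂ < 1` bijectively onto the open simplex `u, v > 0, u + v < 1`: the pair
`y₁ < y₂` is recovered as the roots of `t² - (1 + z u - (1 - z) v) t + z u`, which is negative
at `t = z` and positive at `t = 0, 1`. Its Jacobian is `(y₂ - y₁) / (z (1 - z))` and
`1 - u - v = (z - y₁)(y₂ - z) / (z (1 - z))`, so the integrand becomes
`z^(θα-1) (1 - z)^(θ(M-1)+θ-1)` times the Jacobian times the Dirichlet density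
`u^(θα+θ-1) v^(θ(M-1)-1) (1 - u - v)^(θ-1)`, and the constant is the Dirichlet integral.
-/

open MeasureTheory

noncomputable section

namespace JacobiCorners

def interlacingRegion (z : ℝ) : Set (ℝ × ℝ) :=
  {p | 0 < p.1 ∧ p.1 < z ∧ z < p.2 ∧ p.2 < 1}

def openSimplex : Set (ℝ × ℝ) :=
  {q | 0 < q.1 ∧ 0 < q.2 ∧ q.1 + q.2 < 1}

def dirichletDensity (a b c : ℝ) (q : ℝ × ℝ) : ℝ :=
  q.1 ^ (a - 1) * q.2 ^ (b - 1) * (1 - q.1 - q.2) ^ (c - 1)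

def interlacingMap (z : ℝ) (p : ℝ × ℝ) : ℝ × ℝ :=
  (z⁻¹ * (p.1 * p.2), (1 - z)⁻¹ * ((1 - p.1) * (1 - p.2)))

def interlacingMapDeriv (z : ℝ) (p : ℝ × ℝ) : (ℝ × ℝ) →L[ℝ] (ℝ × ℝ) :=
  (Matrix.toLin (Module.Basis.finTwoProd ℝ) (Module.Basis.finTwoProd ℝ)
    (Matrix.of ![![z⁻¹ * p.2, z⁻¹ * p.1],
      ![-((1 - z)⁻¹ * (1 - p.2)), -((1 - z)⁻¹ * (1 - p.1))]])).toContinuousLinearMap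

theorem isOpen_interlacingRegion (z : ℝ) : IsOpen (interlacingRegion z) :=
  (isOpen_lt continuous_const continuous_fst).inter <|
    (isOpen_lt continuous_fst continuous_const).inter <|
      (isOpen_lt continuous_const continuous_snd).inter (isOpen_lt continuous_snd continuous_const)

theorem hasFDerivAt_interlacingMap (z : ℝ) (p : ℝ × ℝ) :
    HasFDerivAt (interlacingMap z) (interlacingMapDeriv z p) p := by
  have hfst : HasFDerivAt (fun q : ℝ × ℝ => z⁻¹ * (q.1 * q.2))
      (z⁻¹ • (p.1 • ContinuousLinearMap.snd ℝ ℝ ℝ + p.2 • ContinuousLinearMap.fst ℝ ℝ ℝ)) p :=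
    (hasFDerivAt_fst.mul hasFDerivAt_snd).const_mul z⁻¹
  have hsnd : HasFDerivAt (fun q : ℝ × ℝ => (1 - z)⁻¹ * ((1 - q.1) * (1 - q.2)))
      ((1 - z)⁻¹ • ((1 - p.1) • -ContinuousLinearMap.snd ℝ ℝ ℝ +
        (1 - p.2) • -ContinuousLinearMap.fst ℝ ℝ ℝ)) p :=
    ((hasFDerivAt_fst.const_sub 1).mul (hasFDerivAt_snd.const_sub 1)).const_mul (1 - z)⁻¹
  refine (hfst.prodMk hsnd).congr_fderiv ?_
  refine ContinuousLinearMap.ext fun q => Prod.ext ?_ ?_ <;>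
    · simp only [smul_add, smul_neg, ContinuousLinearMap.prod_apply, add_apply, smul_apply,
        ContinuousLinearMap.coe_snd', smul_eq_mul, ContinuousLinearMap.coe_fst', neg_apply,
        interlacingMapDeriv, LinearMap.coe_toContinuousLinearMap', Matrix.toLin_apply,
        Matrix.mulVec, dotProduct, Matrix.of_apply, Matrix.cons_val', Matrix.cons_val_fin_one,
        Module.Basis.coe_finTwoProd_repr, Fin.sum_univ_two, Fin.isValue, Matrix.cons_val_zero,
        Matrix.cons_val_one, Module.Basis.finTwoProd_zero, Module.Basis.finTwoProd_one,
        Prod.smul_mk, Prod.mk_add_mk]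
      ring

theorem det_interlacingMapDeriv (z : ℝ) (p : ℝ × ℝ) :
    (interlacingMapDeriv z p).det = (p.1 - p.2) * (z⁻¹ * (1 - z)⁻¹) := by
  rw [interlacingMapDeriv, ContinuousLinearMap.det, LinearMap.coe_toContinuousLinearMap,
    LinearMap.det_toLin, Matrix.det_fin_two_of]
  ring

theorem one_sub_interlacingMap {z : ℝ} (hz0 : z ≠ 0) (hz1 : 1 - z ≠ 0) (p : ℝ × ℝ) :
    1 - (interlacingMap z p).1 - (interlacingMap z p).2 =
      (z - p.1) * (p.2 - z) * (z⁻¹ * (1 - z)⁻¹) := by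
  simp only [interlacingMap]
  field_simp
  ring

theorem exists_roots_of_quadratic_neg {s c z : ℝ} (h : z ^ 2 - s * z + c < 0) :
    ∃ a b : ℝ, a < z ∧ z < b ∧ a + b = s ∧ a * b = c := by
  have hdisc : 0 < s ^ 2 - 4 * c := by nlinarith [sq_nonneg (2 * z - s)]
  set r := √(s ^ 2 - 4 * c)
  have hr : r ^ 2 = s ^ 2 - 4 * c := Real.sq_sqrt hdisc.le
  have hr0 : 0 < r := Real.sqrt_pos.2 hdisc
  refine ⟨(s - r) / 2, (s + r) / 2, ?_, ?_, by ring, by linear_combination (-1 / 4 : ℝ) * hr⟩ <;>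
    nlinarith

theorem mapsTo_interlacingMap {z : ℝ} (hz0 : 0 < z) (hz1 : z < 1) :
    Set.MapsTo (interlacingMap z) (interlacingRegion z) openSimplex := by
  rintro p ⟨hp1, hp1z, hzp2, hp2⟩
  have h1z : 0 < 1 - z := by linarith
  have h1p1 : 0 < 1 - p.1 := by linarith
  have h1p2 : 0 < 1 - p.2 := by linarith
  have hp2' : 0 < p.2 := hz0.trans hzp2
  have hgap := one_sub_interlacingMap hz0.ne' h1z.ne' p
  have hpos : 0 < (z - p.1) * (p.2 - z) * (z⁻¹ * (1 - z)⁻¹) :=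
    mul_pos (mul_pos (by linarith) (by linarith)) (by positivity)
  refine ⟨?_, ?_, ?_⟩
  · simp only [interlacingMap]; positivity
  · simp only [interlacingMap]; positivity
  · linarith

theorem surjOn_interlacingMap {z : ℝ} (hz0 : 0 < z) (hz1 : z < 1) :
    Set.SurjOn (interlacingMap z) (interlacingRegion z) openSimplex := by
  rintro q ⟨hu, hv, huv⟩
  have h1z : 0 < 1 - z := by linarith
  obtain ⟨a, b, haz, hzb, hsum, hprod⟩ :
      ∃ a b : ℝ, a < z ∧ z < b ∧ a + b = 1 + z * q.1 - (1 - z) * q.2 ∧ a * b = z * q.1 := by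
    apply exists_roots_of_quadratic_neg
    nlinarith [mul_pos (mul_pos hz0 h1z) (sub_pos.2 huv)]
  have hprod' : (1 - a) * (1 - b) = (1 - z) * q.2 := by linear_combination hprod - hsum
  have ha : 0 < a := pos_of_mul_pos_left (hprod ▸ mul_pos hz0 hu) (by linarith)
  have hb : b < 1 :=
    sub_pos.1 (pos_of_mul_pos_right (hprod' ▸ mul_pos h1z hv) (by linarith))
  refine ⟨(a, b), ⟨ha, haz, hzb, hb⟩, Prod.ext ?_ ?_⟩
  · simp only [interlacingMap, hprod]; field_simp
  · simp only [interlacingMap, hprod']; field_simp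

theorem image_interlacingMap {z : ℝ} (hz0 : 0 < z) (hz1 : z < 1) :
    interlacingMap z '' interlacingRegion z = openSimplex :=
  (mapsTo_interlacingMap hz0 hz1).image_subset.antisymm (surjOn_interlacingMap hz0 hz1)

-- `y₁ y₂` and `(1 - y₁)(1 - y₂)` determine `y₁ + y₂`, hence the unordered pair `{y₁, y₂}`.
theorem injOn_interlacingMap {z : ℝ} (hz0 : 0 < z) (hz1 : z < 1) :
    Set.InjOn (interlacingMap z) (interlacingRegion z) := by
  rintro p ⟨hp1, hp1z, hzp2, hp2⟩ q ⟨hq1, hq1z, hzq2, hq2⟩ hpq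
  have hprod : p.1 * p.2 = q.1 * q.2 :=
    mul_left_cancel₀ (inv_ne_zero hz0.ne') (congrArg Prod.fst hpq)
  have hprod' : (1 - p.1) * (1 - p.2) = (1 - q.1) * (1 - q.2) :=
    mul_left_cancel₀ (inv_ne_zero (sub_pos.2 hz1).ne') (congrArg Prod.snd hpq)
  have hsum : p.1 + p.2 = q.1 + q.2 := by linear_combination hprod - hprod'
  have hroot : (p.1 - q.1) * (p.1 - q.2) = 0 := by linear_combination p.1 * hsum - hprod
  rcases mul_eq_zero.1 hroot with h | h
  · exact Prod.ext (by linarith) (by linarith)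
  · linarith

theorem integral_openSimplex_eq {z : ℝ} (hz0 : 0 < z) (hz1 : z < 1) (g : ℝ × ℝ → ℝ) :
    ∫ q in openSimplex, g q =
      ∫ p in interlacingRegion z, (p.2 - p.1) * (z⁻¹ * (1 - z)⁻¹) * g (interlacingMap z p) := by
  rw [← image_interlacingMap hz0 hz1,
    integral_image_eq_integral_abs_det_fderiv_smul volume
      (isOpen_interlacingRegion z).measurableSet
      (fun p _ => (hasFDerivAt_interlacingMap z p).hasFDerivWithinAt)
      (injOn_interlacingMap hz0 hz1)]
  refine setIntegral_congr_fun (isOpen_interlacingRegion z).measurableSet fun p hp => ?_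
  have hdet : (p.1 - p.2) * (z⁻¹ * (1 - z)⁻¹) ≤ 0 :=
    mul_nonpos_of_nonpos_of_nonneg (by linarith [hp.2.1, hp.2.2.1])
      (mul_nonneg (inv_nonneg.2 hz0.le) (inv_nonneg.2 (by linarith)))
  rw [det_interlacingMapDeriv, abs_of_nonpos hdet, smul_eq_mul]
  ring

theorem cornersIntegrand_eq {θ c m z : ℝ} {p : ℝ × ℝ} (hz1 : z < 1)
    (hp : p ∈ interlacingRegion z) :
    (p.1 * p.2) ^ θ * (p.2 - p.1) ^ (1 - 2 * θ) * (p.2 - z) ^ (θ - 1) *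
        (z - p.1) ^ (θ - 1) * z ^ (-2 * θ) * (p.2 - p.1) ^ (2 * θ) *
        (p.1 * p.2) ^ (c - 1) * ((1 - p.1) * (1 - p.2)) ^ (θ * (m - 2) + θ - 1) =
      (p.2 - p.1) * (z⁻¹ * (1 - z)⁻¹) *
          dirichletDensity (c + θ) (θ * (m - 1)) θ (interlacingMap z p) *
        (z ^ (c - 1) * (1 - z) ^ (θ * (m - 1) + θ - 1)) := by
  obtain ⟨hp1, hp1z, hzp2, hp2⟩ := hp
  have hz0 : 0 < z := hp1.trans hp1z
  have : 0 < 1 - z := by linarith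
  have : 0 < 1 - p.1 := by linarith
  have : 0 < 1 - p.2 := by linarith
  have : 0 < p.2 := hz0.trans hzp2
  have : 0 < p.2 - p.1 := by linarith
  have : 0 < p.2 - z := by linarith
  have : 0 < z - p.1 := by linarith
  rw [dirichletDensity, one_sub_interlacingMap hz0.ne' (by positivity)]
  simp only [interlacingMap]
  refine Real.log_injOn_pos (Set.mem_Ioi.2 (by positivity)) (Set.mem_Ioi.2 (by positivity)) ?_
  simp (disch := positivity) only [Real.log_mul, Real.log_rpow, Real.log_inv]
  ring

end JacobiCorners

end

open JacobiCorners in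
theorem stmt17_general (θ alp : ℝ) (M : ℕ) :
    ∃ C : ℝ, ∀ z : ℝ, 0 < z → z < 1 →
      (∫ p in {p : ℝ × ℝ | 0 < p.1 ∧ p.1 < z ∧ z < p.2 ∧ p.2 < 1},
          (p.1 * p.2) ^ θ * (p.2 - p.1) ^ (1 - 2 * θ) * (p.2 - z) ^ (θ - 1) *
            (z - p.1) ^ (θ - 1) * z ^ (-2 * θ) * (p.2 - p.1) ^ (2 * θ) *
            (p.1 * p.2) ^ (θ * alp - 1) *
            ((1 - p.1) * (1 - p.2)) ^ (θ * ((M : ℝ) - 2) + θ - 1))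
        = C * z ^ (θ * alp - 1) * (1 - z) ^ (θ * ((M : ℝ) - 1) + θ - 1) := by
  refine ⟨∫ q in openSimplex, dirichletDensity (θ * alp + θ) (θ * ((M : ℝ) - 1)) θ q,
    fun z hz0 hz1 => ?_⟩
  rw [integral_openSimplex_eq hz0 hz1, mul_assoc, ← integral_mul_const]
  exact setIntegral_congr_fun (isOpen_interlacingRegion z).measurableSet
    fun p hp => cornersIntegrand_eq hz1 hp

theorem stmt17 (θ alp : ℝ) (hθ : 0 < θ) (halp : 0 < alp) (M : ℕ) (hM : 2 ≤ M) :
    ∃ C : ℝ, ∀ z : ℝ, 0 < z → z < 1 →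
      (∫ p in {p : ℝ × ℝ | 0 < p.1 ∧ p.1 < z ∧ z < p.2 ∧ p.2 < 1},
          (p.1 * p.2) ^ θ * (p.2 - p.1) ^ (1 - 2 * θ) * (p.2 - z) ^ (θ - 1) *
            (z - p.1) ^ (θ - 1) * z ^ (-2 * θ) * (p.2 - p.1) ^ (2 * θ) *
            (p.1 * p.2) ^ (θ * alp - 1) *
            ((1 - p.1) * (1 - p.2)) ^ (θ * ((M : ℝ) - 2) + θ - 1))
        = C * z ^ (θ * alp - 1) * (1 - z) ^ (θ * ((M : ℝ) - 1) + θ - 1) :=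
  stmt17_general θ alp M
end
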